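/- arXiv:1402.2878 — 2 statements merged into one kernel-verified Lean document; each statement's English description precedes it below -/
import Mathlib

section
/- Let n ≥ 1 and let λ be an edge-magic total labeling of the path P_n with magic constant k. Then n·k ≥ f(2n+1) + f(n−1), where f(r) = r(r+1)/2; equivalently, k ≥ (f(2n+1) + f(n−1))/n. (The sum of the n edge weights equals the sum of all 2n+1 labels plus the sum of the labels of the n−1 internal vertices, and the latter is at least 1 + 2 + ⋯ + (n−1).) -/
/-- The triangular number `f(r) = r(r+1)/2` (the division is exact). -/
def triangular (r : ℕ) : ℕ := r * (r + 1) / 2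

/-- The path `P n` has vertices `0,…,n` and edges `{j,j+1}` for `0 ≤ j < n`, a total of
`2n+1` graph elements, encoded as `Fin (2n+1)` with vertex `j` at index `2j` and edge
`{j,j+1}` at index `2j+1`.  `IsPathEMTL n σ k` says that the bijective labeling sending
element `x` to `(σ x).val + 1 ∈ {1,…,2n+1}` is an edge-magic total labeling of `P n`
with magic constant `k`: every edge weight `λ(u) + λ({u,v}) + λ(v)` equals `k`. -/
def IsPathEMTL (n : ℕ) (σ : Equiv.Perm (Fin (2 * n + 1))) (k : ℕ) : Prop :=
  ∀ i : Fin n,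
    ((σ ⟨2 * i.1, by have := i.isLt; omega⟩).val + 1) +
    ((σ ⟨2 * i.1 + 1, by have := i.isLt; omega⟩).val + 1) +
    ((σ ⟨2 * i.1 + 2, by have := i.isLt; omega⟩).val + 1) = k

open Finset

lemma sum_succ_eq_triangular (m : ℕ) :
    ∑ i ∈ range m, (i + 1) = m * (m + 1) / 2 := by
  have h := Finset.sum_range_id (m + 1)
  rw [Finset.sum_range_succ'] at h
  simpa [mul_comm] using h

lemma sum_range_card_le (t : Finset ℕ) :
    ∑ i ∈ range t.card, i ≤ ∑ x ∈ t, x := by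
  induction t using Finset.strongInduction with
  | _ t ih =>
    rcases t.eq_empty_or_nonempty with rfl | ht
    · simp
    · have hM : t.max' ht ∈ t := t.max'_mem ht
      have hsub : t ⊆ range (t.max' ht + 1) := fun x hx =>
        Finset.mem_range.2 (Nat.lt_succ_of_le (t.le_max' x hx))
      have hcard : t.card ≤ t.max' ht + 1 := by
        simpa using Finset.card_le_card hsub
      have key := ih (t.erase (t.max' ht)) (Finset.erase_ssubset hM)
      rw [Finset.card_erase_of_mem hM] at key
      have hpos : 1 ≤ t.card := Finset.card_pos.2 ht
      have hsplit : ∑ x ∈ t, x = ∑ x ∈ t.erase (t.max' ht), x + t.max' ht :=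
        (Finset.sum_erase_add t _ hM).symm
      have hc : t.card = (t.card - 1) + 1 := by omega
      rw [hsplit, hc, Finset.sum_range_succ]
      exact add_le_add key (by omega)

lemma path_sum_identity (f : ℕ → ℕ) :
    ∀ n, 1 ≤ n →
      ∑ i ∈ range n, (f (2*i) + f (2*i+1) + f (2*i+2)) =
        ∑ j ∈ range (2*n+1), f j + ∑ i ∈ range (n-1), f (2*i+2) := by
  intro n
  induction n with
  | zero => omega
  | succ n ih =>
    intro _
    rcases Nat.eq_zero_or_pos n with rfl | hn
    · simp [Finset.sum_range_succ]
    · have h1 : 2*(n+1)+1 = (2*n+1)+1+1 := by ring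
      have h2 : (n+1)-1 = (n-1)+1 := by omega
      have h3 : 2*(n-1)+2 = 2*n := by omega
      rw [Finset.sum_range_succ, ih hn, h1,
        Finset.sum_range_succ f ((2*n+1)+1), Finset.sum_range_succ f (2*n+1),
        h2, Finset.sum_range_succ (fun i => f (2*i+2)) (n-1), h3]
      have h4 : 2*n+1+1 = 2*n+2 := by ring
      rw [h4]
      ring

/-- If `λ` is an edge-magic total labeling of `P n` (`n ≥ 1`) with magic constant `k`,
then `n·k ≥ f(2n+1) + f(n−1)` where `f(r) = r(r+1)/2`. -/
theorem pathEMTL_magic_lower_bound (n : ℕ) (hn : 1 ≤ n)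
    (σ : Equiv.Perm (Fin (2 * n + 1))) (k : ℕ) (hσ : IsPathEMTL n σ k) :
    triangular (2 * n + 1) + triangular (n - 1) ≤ n * k := by
  set f : ℕ → ℕ := fun j => if h : j < 2 * n + 1 then (σ ⟨j, h⟩).val + 1 else 0 with hf
  -- each edge weight is k
  have hw : ∀ i ∈ range n, f (2*i) + f (2*i+1) + f (2*i+2) = k := by
    intro i hi
    rw [Finset.mem_range] at hi
    have h1 : 2*i < 2*n+1 := by omega
    have h2 : 2*i+1 < 2*n+1 := by omega
    have h3 : 2*i+2 < 2*n+1 := by omega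
    simp only [hf, dif_pos h1, dif_pos h2, dif_pos h3]
    exact hσ ⟨i, hi⟩
  have hid := path_sum_identity f n hn
  have hnk : n * k = ∑ j ∈ range (2*n+1), f j + ∑ i ∈ range (n-1), f (2*i+2) := by
    rw [← hid, Finset.sum_congr rfl hw]
    simp [mul_comm]
  -- total label sum
  have htot : ∑ j ∈ range (2*n+1), f j = triangular (2*n+1) := by
    rw [← Fin.sum_univ_eq_sum_range]
    have heq : ∀ x : Fin (2*n+1), f x.val = (σ x).val + 1 := by
      intro x
      simp only [hf, dif_pos x.isLt, Fin.eta]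
    rw [Finset.sum_congr rfl (fun x _ => heq x),
      Equiv.sum_comp σ (fun x : Fin (2*n+1) => x.val + 1),
      Fin.sum_univ_eq_sum_range (fun j => j + 1)]
    exact sum_succ_eq_triangular _
  -- internal vertex label sum lower bound
  have hint : triangular (n-1) ≤ ∑ i ∈ range (n-1), f (2*i+2) := by
    set g : ℕ → ℕ := fun i => if h : 2*i+2 < 2*n+1 then (σ ⟨2*i+2, h⟩).val else 0 with hg
    have hfg : ∀ i ∈ range (n-1), f (2*i+2) = g i + 1 := by
      intro i hi
      rw [Finset.mem_range] at hi
      have h3 : 2*i+2 < 2*n+1 := by omega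
      simp only [hf, hg, dif_pos h3]
    have hinj : Set.InjOn g (range (n-1)) := by
      intro a ha b hb hab
      rw [Finset.coe_range, Set.mem_Iio] at ha hb
      have h1 : 2*a+2 < 2*n+1 := by omega
      have h2 : 2*b+2 < 2*n+1 := by omega
      simp only [hg, dif_pos h1, dif_pos h2] at hab
      have := σ.injective (Fin.val_injective hab)
      have : 2*a+2 = 2*b+2 := congrArg Fin.val this
      omega
    have hcard : ((range (n-1)).image g).card = n - 1 := by
      rw [Finset.card_image_of_injOn hinj, Finset.card_range]
    have hsum : ∑ x ∈ (range (n-1)).image g, x = ∑ i ∈ range (n-1), g i :=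
      Finset.sum_image (fun a ha b hb h => hinj ha hb h)
    have hle := sum_range_card_le ((range (n-1)).image g)
    rw [hcard, hsum] at hle
    calc triangular (n-1) = ∑ i ∈ range (n-1), (i+1) := (sum_succ_eq_triangular _).symm
      _ = ∑ i ∈ range (n-1), i + (n-1) := by
          rw [Finset.sum_add_distrib]; simp
      _ ≤ ∑ i ∈ range (n-1), g i + (n-1) := by omega
      _ = ∑ i ∈ range (n-1), (g i + 1) := by
          rw [Finset.sum_add_distrib]; simp
      _ = ∑ i ∈ range (n-1), f (2*i+2) := (Finset.sum_congr rfl hfg).symm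
  omega
end

section
/- Let n ≥ 1 and let λ be an edge-magic total labeling of the path P_n with magic constant k. Then n·k ≤ 2·f(2n+1) − f(n+2), where f(r) = r(r+1)/2; equivalently, k ≤ (2·f(2n+1) − f(n+2))/n. (The sum of the n edge weights equals the sum of all 2n+1 labels plus the sum of the labels of the n−1 internal vertices, and the latter is at most (n+3) + (n+4) + ⋯ + (2n+1) = f(2n+1) − f(n+2).) -/
open Finset

lemma tri_succ (r : ℕ) : triangular (r + 1) = triangular r + (r + 1) := by
  unfold triangular
  have h : (r+1)*(r+1+1) = r*(r+1) + 2*(r+1) := by ring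
  omega

lemma tri_split (a b : ℕ) :
    (∑ i ∈ range b, (a + 1 + i)) + triangular a = triangular (a + b) := by
  induction b with
  | zero => simp
  | succ b ih =>
      rw [sum_range_succ, show a + (b+1) = (a+b)+1 by ring, tri_succ]
      omega

lemma telescope (a : ℕ → ℕ) (n : ℕ) :
    (∑ i ∈ range n, (a (2*i) + a (2*i+1) + a (2*i+2))) + a 0 + a (2*n) =
    (∑ x ∈ range (2*n+1), a x) + ∑ j ∈ range (n+1), a (2*j) := by
  induction n with
  | zero => simp
  | succ n ih =>
      rw [sum_range_succ, show 2*(n+1)+1 = (2*n+1)+1+1 by ring, sum_range_succ,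
        sum_range_succ, show (n+1)+1 = (n+1)+1 by rfl, sum_range_succ (fun j => a (2*j)) (n+1)]
      have h1 : 2*n+1+1 = 2*n+2 := by ring
      have h2 : 2*(n+1) = 2*n+2 := by ring
      rw [h1, h2]
      linarith

lemma sum_distinct_bound : ∀ (m N : ℕ) (T : Finset ℕ), T ⊆ range N → T.card = m →
    (∑ x ∈ T, (x + 1)) ≤ ∑ i ∈ range m, (N - i) := by
  intro m
  induction m with
  | zero =>
      intro N T _ hc
      rw [Finset.card_eq_zero] at hc
      simp [hc]
  | succ m ih =>
      intro N T hsub hc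
      have hne : T.Nonempty := Finset.card_pos.mp (by omega)
      set M := T.max' hne with hM
      have hMT : M ∈ T := T.max'_mem hne
      have hMN : M < N := mem_range.mp (hsub hMT)
      have hsub' : T.erase M ⊆ range (N - 1) := by
        intro x hx
        have hxT := Finset.mem_of_mem_erase hx
        have hxM : x ≠ M := Finset.ne_of_mem_erase hx
        have := T.le_max' x hxT
        exact mem_range.mpr (by omega)
      have hc' : (T.erase M).card = m := by
        rw [Finset.card_erase_of_mem hMT, hc]; omega
      have hbound := ih (N - 1) (T.erase M) hsub' hc'
      have hsum : (∑ x ∈ T, (x + 1)) = (M + 1) + ∑ x ∈ T.erase M, (x + 1) :=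
        (Finset.add_sum_erase T _ hMT).symm
      have hrhs : (∑ i ∈ range (m + 1), (N - i)) =
          (∑ i ∈ range m, (N - (i + 1))) + N := by
        rw [Finset.sum_range_succ' (fun i => N - i) m]
        simp
      have heq : (∑ i ∈ range m, (N - (i + 1))) = ∑ i ∈ range m, (N - 1 - i) := by
        apply Finset.sum_congr rfl
        intro i _
        omega
      rw [hsum, hrhs, heq]
      omega

lemma tri_eq_sum (M : ℕ) : triangular M = ∑ i ∈ range M, (i + 1) := by
  induction M with
  | zero => simp [triangular]
  | succ M ih => rw [tri_succ, sum_range_succ, ih]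


/-- If `λ` is an edge-magic total labeling of `P n` (`n ≥ 1`) with magic constant `k`,
then `n·k ≤ 2·f(2n+1) − f(n+2)` where `f(r) = r(r+1)/2`. -/
theorem pathEMTL_magic_upper_bound (n : ℕ) (hn : 1 ≤ n)
    (σ : Equiv.Perm (Fin (2 * n + 1))) (k : ℕ) (hσ : IsPathEMTL n σ k) :
    n * k ≤ 2 * triangular (2 * n + 1) - triangular (n + 2) := by
  set a : ℕ → ℕ := fun x => if h : x < 2 * n + 1 then (σ ⟨x, h⟩).val + 1 else 0 with ha
  -- each edge weight is k
  have hweight : ∀ i < n, a (2*i) + a (2*i+1) + a (2*i+2) = k := by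
    intro i hi
    have h0 : 2*i < 2*n+1 := by omega
    have h1 : 2*i+1 < 2*n+1 := by omega
    have h2 : 2*i+2 < 2*n+1 := by omega
    have := hσ ⟨i, hi⟩
    simp only [ha, dif_pos h0, dif_pos h1, dif_pos h2]
    exact this
  -- sum of weights is n * k
  have hsumw : (∑ i ∈ range n, (a (2*i) + a (2*i+1) + a (2*i+2))) = n * k := by
    rw [Finset.sum_congr rfl (fun i hi => hweight i (mem_range.mp hi))]
    simp [mul_comm]
  -- total of all labels
  have htotal : (∑ x ∈ range (2*n+1), a x) = triangular (2*n+1) := by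
    rw [← Fin.sum_univ_eq_sum_range]
    have hx : ∀ x : Fin (2*n+1), a x.val = (σ x).val + 1 := by
      intro x
      simp only [ha, dif_pos x.isLt]
    rw [Finset.sum_congr rfl (fun x _ => hx x),
        Equiv.sum_comp σ (fun x : Fin (2*n+1) => x.val + 1),
        Fin.sum_univ_eq_sum_range (fun x => x + 1), ← tri_eq_sum]
  obtain ⟨m, rfl⟩ : ∃ m, n = m + 1 := ⟨n - 1, by omega⟩
  -- internal vertex labels
  set S := ∑ j ∈ range m, a (2*j+2) with hS
  have hsplit : (∑ j ∈ range (m+1+1), a (2*j)) = a 0 + S + a (2*(m+1)) := by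
    rw [Finset.sum_range_succ (fun j => a (2*j)) (m+1),
        Finset.sum_range_succ' (fun j => a (2*j)) m]
    have h3 : (∑ j ∈ range m, a (2*(j+1))) = S :=
      Finset.sum_congr rfl (fun j _ => by ring_nf)
    rw [h3]
    norm_num
    omega
  have htel := telescope a (m+1)
  rw [hsumw, htotal, hsplit] at htel
  -- bound on internal labels
  set b : ℕ → ℕ := fun j => if h : 2*j+2 < 2*(m+1)+1 then (σ ⟨2*j+2, h⟩).val else 0 with hb
  have hab : ∀ j < m, a (2*j+2) = b j + 1 := by
    intro j hj
    have h2 : 2*j+2 < 2*(m+1)+1 := by omega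
    simp only [ha, hb, dif_pos h2]
  have hbinj : ∀ x ∈ range m, ∀ y ∈ range m, b x = b y → x = y := by
    intro x hx y hy hxy
    have hx' : 2*x+2 < 2*(m+1)+1 := by have := mem_range.mp hx; omega
    have hy' : 2*y+2 < 2*(m+1)+1 := by have := mem_range.mp hy; omega
    simp only [hb, dif_pos hx', dif_pos hy'] at hxy
    have h5 := σ.injective (Fin.val_injective hxy)
    have h6 : (2*x+2 : ℕ) = 2*y+2 := congrArg Fin.val h5
    omega
  set T := (range m).image b with hT
  have hTsub : T ⊆ range (2*(m+1)+1) := by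
    intro x hx
    obtain ⟨j, hj, rfl⟩ := Finset.mem_image.mp hx
    have hj' : 2*j+2 < 2*(m+1)+1 := by have := mem_range.mp hj; omega
    simp only [hb, dif_pos hj']
    exact mem_range.mpr (σ ⟨2*j+2, hj'⟩).isLt
  have hTcard : T.card = m := by
    rw [hT, Finset.card_image_of_injOn hbinj, Finset.card_range]
  have hTsum : (∑ x ∈ T, (x + 1)) = S := by
    rw [hT, Finset.sum_image hbinj]
    exact Finset.sum_congr rfl (fun j hj => (hab j (mem_range.mp hj)).symm)
  have hSbound : S ≤ ∑ i ∈ range m, (2*(m+1)+1 - i) := by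
    rw [← hTsum]
    exact sum_distinct_bound m (2*(m+1)+1) T hTsub hTcard
  -- rewrite the RHS bound via reflection
  have hrefl : (∑ i ∈ range m, (2*(m+1)+1 - i)) = ∑ i ∈ range m, ((m+1+2) + 1 + i) := by
    rw [← Finset.sum_range_reflect (fun i => 2*(m+1)+1 - i) m]
    apply Finset.sum_congr rfl
    intro i hi
    have := mem_range.mp hi
    omega
  have hid := tri_split (m+1+2) m
  have heq : (m+1+2) + m = 2*(m+1)+1 := by ring
  rw [heq] at hid
  rw [hrefl] at hSbound
  omega
end
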